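/- With exact QSD sampling in the Dephasing Step, the pair (τ_acc, X_acc) produced by the Parallel Step of ParRep has the same joint law as (τ, X_τ), where (X_n) starts from the QSD ν in S and τ is its first exit time from S. -/

import Mathlib

open MeasureTheory ProbabilityTheory Filter
open scoped Classical

noncomputable section

namespace ParRep

variable {E : Type*} [MeasurableSpace E]

/-- The σ-algebra generated by `X 0, ..., X n`. -/
def past {Ω : Type*} [MeasurableSpace Ω] (X : ℕ → Ω → E) (n : ℕ) : MeasurableSpace Ω :=
  ⨆ i ∈ Finset.range (n + 1), MeasurableSpace.comap (X i) inferInstance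

/-- `X` is a time-homogeneous Markov chain with transition kernel `κ` under `P`:
each `X n` is measurable, `κ` is a Markov kernel, and the conditional law of
`X (n+1)` given the past is `κ (X n)`. -/
def IsMarkov {Ω : Type*} [MeasurableSpace Ω] (P : Measure Ω)
    (X : ℕ → Ω → E) (κ : Kernel E E) : Prop :=
  (∀ n, Measurable (X n)) ∧ IsMarkovKernel κ ∧
  ∀ (n : ℕ) (A : Set E), MeasurableSet A →
    (fun ω => ((κ (X n ω)) A).toReal)
      =ᵐ[P] P[(X (n + 1) ⁻¹' A).indicator (fun _ => (1 : ℝ)) | past X n]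

/-- The first exit time of the chain `X` from the set `S`. -/
def exitTime {Ω : Type*} (X : ℕ → Ω → E) (S : Set E) (ω : Ω) : ℕ :=
  sInf {n | X n ω ∉ S}

/-- The event of surviving in `S` during times `1, ..., n`. -/
def surv {Ω : Type*} (X : ℕ → Ω → E) (S : Set E) (n : ℕ) : Set Ω :=
  ⋂ i ∈ Finset.Icc 1 n, X i ⁻¹' S

/-- `ν` is a quasistationary distribution for the chain `X` in `S` under `P`. -/
def IsQSD {Ω : Type*} [MeasurableSpace Ω] (P : Measure Ω)
    (X : ℕ → Ω → E) (S : Set E) (ν : Measure E) : Prop :=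
  ∀ n, 1 ≤ n → ∀ A : Set E, A ⊆ S → MeasurableSet A →
    P (X n ⁻¹' A ∩ surv X S n) = ν A * P (surv X S n)

/-- `ν` is a QSD for the kernel `κ` in `S`: every chain with kernel `κ` started
from `ν` satisfies the QSD identity. -/
def IsQSDFor (κ : Kernel E E) (S : Set E) (ν : Measure E) : Prop :=
  ∀ (Ω : Type) (_ : MeasurableSpace Ω) (P : Measure Ω) (X : ℕ → Ω → E),
    IsProbabilityMeasure P → IsMarkov P X κ → P.map (X 0) = ν → IsQSD P X S ν

/-- The `n`-step distribution of the chain with kernel `κ` and initial law `μ0`. -/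
def iterMeasure {α : Type*} [MeasurableSpace α] (κ : Kernel α α) (μ0 : Measure α) :
    ℕ → Measure α
  | 0 => μ0
  | n + 1 => (iterMeasure κ μ0 n).bind (fun a => κ a)

/-- The Doeblin-type minorization condition on `S`. -/
def Doeblin (κ : Kernel E E) (S : Set E) (α : ℝ) (lam : Measure E) : Prop :=
  IsProbabilityMeasure lam ∧ lam Sᶜ = 0 ∧
  ∀ x ∈ S, ∀ C : Set E, MeasurableSet C → C ⊆ S →
    ENNReal.ofReal α * lam C ≤ (κ x) C

/-- Uniform ergodicity of the kernel `κ` with limiting measure `μ`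
(total variation expressed as a supremum over measurable sets). -/
def UnifErgodic (κ : Kernel E E) (μ : Measure E) : Prop :=
  IsProbabilityMeasure μ ∧
  ∀ ε : ℝ, 0 < ε → ∃ N : ℕ, ∀ n ≥ N, ∀ ξ : Measure E, IsProbabilityMeasure ξ →
    ∀ A : Set E, MeasurableSet A →
      |(iterMeasure κ ξ n A).toReal - (μ A).toReal| ≤ ε

/-- `κY` is the transition kernel of the extended (ParRep) chain on `E × ℕ`
built from `κ`, the collection `𝒮` of metastable sets, the QSDs `νF`, and the
decorrelation time `Tc` (the counter is capped at `Tc`). -/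
def IsExtKernel (κ : Kernel E E) (𝒮 : Set (Set E)) (νF : Set E → Measure E)
    (Tc : ℕ) (κY : Kernel (E × ℕ) (E × ℕ)) : Prop :=
  (∀ y : E, (∀ S ∈ 𝒮, y ∉ S) → ∀ t : ℕ,
      κY (y, t) = ((κ y).map (fun y' => (y', 0)) : Measure (E × ℕ))) ∧
  (∀ S ∈ 𝒮, ∀ y ∈ S,
    (∀ t : ℕ, t + 1 < Tc →
      κY (y, t) = ((κ y).map (fun y' => (y', if y' ∈ S then t + 1 else 0)) : Measure (E × ℕ))) ∧
    κY (y, Tc - 1) =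
      (((νF S).bind (fun z => κ z)).map (fun y' => (y', if y' ∈ S then Tc else 0)) : Measure (E × ℕ)) ∧
    κY (y, Tc) = ((κ y).map (fun y' => (y', if y' ∈ S then Tc else 0)) : Measure (E × ℕ)))

/-- Harris chain data `(ε, A, B, ρ)` for the kernel `κ`. -/
def IsHarris {σ : Type*} [MeasurableSpace σ] (κ : Kernel σ σ)
    (ε : ℝ) (A B : Set σ) (ρ : Measure σ) : Prop :=
  0 < ε ∧ IsProbabilityMeasure ρ ∧ ρ Bᶜ = 0 ∧
  (∀ x : σ, ∃ n : ℕ, 0 < iterMeasure κ (Measure.dirac x) n A) ∧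
  (∀ x ∈ A, ∀ C : Set σ, MeasurableSet C → C ⊆ B →
    ENNReal.ofReal ε * ρ C ≤ (κ x) C)

/-- `κbar` is the auxiliary (split-chain) kernel on `Option σ` associated with the
Harris chain data `(ε, A, ρ)`; `none` is the regeneration atom. -/
def IsAuxKernel {σ : Type*} [MeasurableSpace σ] (κ : Kernel σ σ)
    (A : Set σ) (ε : ℝ) (ρ : Measure σ)
    (κbar : Kernel (σ ⊕ Unit) (σ ⊕ Unit)) : Prop :=
  (∀ x ∉ A, κbar (Sum.inl x) = ((κ x).map Sum.inl : Measure (σ ⊕ Unit))) ∧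
  (∀ x ∈ A, κbar (Sum.inl x)
      = (((κ x) - (ENNReal.ofReal ε) • ρ).map Sum.inl : Measure (σ ⊕ Unit))
        + (ENNReal.ofReal ε) • Measure.dirac (Sum.inr () : σ ⊕ Unit)) ∧
  (κbar (Sum.inr ()) : Measure (σ ⊕ Unit)) = ρ.bind (fun x => κbar (Sum.inl x))

end ParRep

/-! Started from the QSD `ν`, the chain survives each step with probability
`g = ∫⁻ x, κ x S ∂ν` whatever happened before: given survival up to time `n`, the QSD identity
makes `X n` again `ν`-distributed, and the Markov property makes the next step a fresh draw from
`ν.bind κ`. Hence `P (τ > n) = g ^ n` and `P (τ = n + 1, X τ ∈ A) = g ^ n * h A`, where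
`h A = ∫⁻ x, κ x (Sᶜ ∩ A) ∂ν`.

In the parallel step write `τacc - 1 = (N * b + i) * T + r` with `i < N` and `r < T`. Up to a null
set, `{τacc = (N * b + i) * T + r + 1, Xacc ∈ A}` is the event that the replicas `j < i` survive
`b + 1` polling blocks, replica `i` exits at time `b * T + r + 1` into `A`, and the replicas
`j > i` survive `b` blocks. By independence its probability is
`g ^ ((b + 1) * T * i) * (g ^ (b * T + r) * h A) * g ^ (b * T * (N - i - 1))`, which is
`g ^ ((N * b + i) * T + r) * h A`: the same as for a single chain. -/

open scoped ENNReal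

theorem Nat.eq_and_eq_of_mul_add_eq {q q' r r' n : ℕ} (hr : r < n) (hr' : r' < n)
    (h : q * n + r = q' * n + r') :
    q = q' ∧ r = r' := by
  have hn : 0 < n := by omega
  obtain ⟨hq, hr⟩ := (Nat.div_mod_unique hn).2 ⟨(by ring : r + n * q = q * n + r), hr⟩
  obtain ⟨hq', hr'⟩ := (Nat.div_mod_unique hn).2 ⟨(by ring : r' + n * q' = q' * n + r'), hr'⟩
  rw [h] at hq hr
  exact ⟨hq.symm.trans hq', hr.symm.trans hr'⟩

theorem Finset.prod_range_eq_pow_mul_mul_pow {M : Type*} [CommMonoid M] {f : ℕ → M} {N i : ℕ}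
    {x y z : M} (hi : i < N) (hx : ∀ j < i, f j = x) (hy : f i = y)
    (hz : ∀ j, i < j → j < N → f j = z) :
    ∏ j ∈ Finset.range N, f j = x ^ i * y * z ^ (N - i - 1) := by
  obtain ⟨p, rfl⟩ : ∃ p, N = i + 1 + p := ⟨N - i - 1, by omega⟩
  rw [Finset.prod_range_add, Finset.prod_range_succ, Finset.prod_congr rfl fun j hj => hx j
    (Finset.mem_range.1 hj), Finset.prod_congr rfl fun j hj => hz (i + 1 + j) (by omega)
    (by have := Finset.mem_range.1 hj; omega), Finset.prod_const, Finset.prod_const,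
    Finset.card_range, Finset.card_range, hy, show i + 1 + p - i - 1 = p by omega]

namespace ParRep

variable {E Ω : Type*}

section ExitTime

variable {X : ℕ → Ω → E} {S : Set E} {ω : Ω}

lemma mem_surv_iff {n : ℕ} : ω ∈ surv X S n ↔ ∀ i, 1 ≤ i → i ≤ n → X i ω ∈ S := by
  simp [surv]

lemma surv_zero : surv X S 0 = Set.univ := by
  ext ω
  simp only [mem_surv_iff, Set.mem_univ, iff_true]
  omega

lemma surv_succ (n : ℕ) : surv X S (n + 1) = surv X S n ∩ X (n + 1) ⁻¹' S := by
  ext ω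
  simp only [Set.mem_inter_iff, Set.mem_preimage, mem_surv_iff]
  refine ⟨fun h => ⟨fun i hi hin => h i hi (by omega), h _ (by omega) le_rfl⟩, ?_⟩
  rintro ⟨h, hn⟩ i hi hin
  rcases Nat.lt_or_ge i (n + 1) with hlt | hge
  exacts [h i hi (by omega), (show i = n + 1 by omega) ▸ hn]

lemma exitTime_eq_zero_iff : exitTime X S ω = 0 ↔ X 0 ω ∉ S ∨ ∀ n, X n ω ∈ S := by
  simp [exitTime, Nat.sInf_eq_zero, Set.eq_empty_iff_forall_notMem]

lemma lt_exitTime_iff (h0 : X 0 ω ∈ S) (hexit : ∃ n, X n ω ∉ S) (n : ℕ) :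
    n < exitTime X S ω ↔ ω ∈ surv X S n := by
  rw [exitTime, Nat.lt_iff_add_one_le, le_csInf_iff' (s := {m | X m ω ∉ S}) hexit, mem_surv_iff]
  constructor
  · intro h i hi1 hin
    by_contra hi
    exact absurd (h hi) (by omega)
  · intro h m hm
    by_contra hlt
    rcases Nat.eq_zero_or_pos m with rfl | hm0
    · exact hm h0
    · exact hm (h m hm0 (by omega))

lemma exitTime_eq_succ_iff (h0 : X 0 ω ∈ S) (n : ℕ) :
    exitTime X S ω = n + 1 ↔ ω ∈ surv X S n ∧ X (n + 1) ω ∉ S := by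
  constructor
  · intro h
    have hexit : ∃ m, X m ω ∉ S := by
      by_contra hne
      simp only [not_exists, not_not] at hne
      exact absurd (exitTime_eq_zero_iff.2 (Or.inr hne)) (by omega)
    refine ⟨(lt_exitTime_iff h0 hexit n).1 (by omega), ?_⟩
    exact h ▸ Nat.sInf_mem hexit
  · rintro ⟨hs, hn⟩
    exact le_antisymm (Nat.sInf_le hn) ((lt_exitTime_iff h0 ⟨_, hn⟩ n).2 hs)

end ExitTime

section Markov

variable [MeasurableSpace E] [MeasurableSpace Ω] {P : Measure Ω} {X : ℕ → Ω → E} {κ : Kernel E E}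
  {S : Set E}

lemma past_le (hX : ∀ n, Measurable (X n)) (n : ℕ) : past X n ≤ ‹MeasurableSpace Ω› :=
  iSup₂_le fun i _ => (hX i).comap_le

lemma measurableSet_past_preimage {u n : ℕ} (hu : u ≤ n) {A : Set E} (hA : MeasurableSet A) :
    MeasurableSet[past X n] (X u ⁻¹' A) :=
  le_iSup₂ (f := fun i (_ : i ∈ Finset.range (n + 1)) => MeasurableSpace.comap (X i) inferInstance)
    u (Finset.mem_range.2 (Nat.lt_succ_of_le hu)) _ ⟨A, hA, rfl⟩

lemma measurableSet_past_surv (hS : MeasurableSet S) (n : ℕ) :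
    MeasurableSet[past X n] (surv X S n) :=
  .biInter (Finset.countable_toSet _) fun _ hi =>
    measurableSet_past_preimage (Finset.mem_Icc.1 hi).2 hS

lemma IsMarkov.measure_inter_preimage_succ [IsFiniteMeasure P] (hM : IsMarkov P X κ) {n : ℕ}
    {F : Set Ω} (hF : MeasurableSet[past X n] F) {B : Set E} (hB : MeasurableSet B) :
    P (F ∩ X (n + 1) ⁻¹' B) = ∫⁻ ω in F, κ (X n ω) B ∂P := by
  obtain ⟨hX, hκ, hcond⟩ := hM
  have hB' : MeasurableSet (X (n + 1) ⁻¹' B) := hX _ hB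
  have hint : Integrable ((X (n + 1) ⁻¹' B).indicator fun _ => (1 : ℝ)) P :=
    (integrable_indicator_iff hB').2 (integrableOn_const (measure_ne_top _ _))
  have hreal : ∫ ω in F, (κ (X n ω) B).toReal ∂P = P.real (F ∩ X (n + 1) ⁻¹' B) := by
    rw [setIntegral_congr_ae (past_le hX n _ hF) ((hcond n B hB).mono fun _ h _ => h),
      setIntegral_condExp (past_le hX n) hint hF, setIntegral_indicator hB', setIntegral_const,
      smul_eq_mul, mul_one, Measure.real]
  have hle (ω : Ω) : κ (X n ω) B ≤ 1 := prob_le_one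
  have hfin : ∫⁻ ω in F, κ (X n ω) B ∂P ≠ ∞ :=
    ne_top_of_le_ne_top (measure_ne_top P F) ((lintegral_mono hle).trans_eq (setLIntegral_one F))
  rw [integral_toReal (f := fun ω => κ (X n ω) B)
    ((κ.measurable_coe hB).comp (hX n)).aemeasurable
    (ae_of_all _ fun ω => (hle ω).trans_lt ENNReal.one_lt_top)] at hreal
  exact (ENNReal.toReal_eq_toReal_iff' (measure_ne_top _ _) hfin).1 hreal.symm

end Markov

section QSDChain

variable [MeasurableSpace E] [MeasurableSpace Ω]

lemma lintegral_kernel_le_one {κ : Kernel E E} [IsMarkovKernel κ] {ν : Measure E}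
    [IsProbabilityMeasure ν] (S : Set E) : ∫⁻ x, κ x S ∂ν ≤ 1 :=
  (lintegral_mono fun _ => prob_le_one).trans_eq (by simp)

lemma lintegral_kernel_compl_inter_eq_zero {κ : Kernel E E} [IsMarkovKernel κ] {ν : Measure E}
    [IsProbabilityMeasure ν] {S : Set E} (hS : MeasurableSet S) (hg : ∫⁻ x, κ x S ∂ν = 1)
    (A : Set E) : ∫⁻ x, κ x (Sᶜ ∩ A) ∂ν = 0 := by
  have hsum : ∫⁻ x, κ x S ∂ν + ∫⁻ x, κ x Sᶜ ∂ν = 1 := by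
    rw [← lintegral_add_left (κ.measurable_coe hS)]
    simp [measure_add_measure_compl hS]
  rw [hg] at hsum
  have hcompl : ∫⁻ x, κ x Sᶜ ∂ν = 0 := by simpa using hsum
  exact le_antisymm ((lintegral_mono fun _ => measure_mono Set.inter_subset_left).trans
    hcompl.le) zero_le

/-- At `k = 0` this accounts for the junk value `exitTime = 0` of a chain that never leaves `S`,
which for a chain started in `S` happens almost surely exactly when `∫⁻ x, κ x S ∂ν = 1`. -/
def qsdExitLaw (κ : Kernel E E) (S : Set E) (ν : Measure E) : ℕ → Set E → ℝ≥0∞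
  | 0, A => if ∫⁻ x, κ x S ∂ν = 1 then ν A else 0
  | n + 1, A => (∫⁻ x, κ x S ∂ν) ^ n * ∫⁻ x, κ x (Sᶜ ∩ A) ∂ν

structure IsQSDChain (P : Measure Ω) (X : ℕ → Ω → E) (κ : Kernel E E) (S : Set E)
    (ν : Measure E) : Prop where
  isMarkov : IsMarkov P X κ
  isQSD : IsQSD P X S ν
  map_zero : P.map (X 0) = ν
  measure_compl : ν Sᶜ = 0

namespace IsQSDChain

variable {P : Measure Ω} {X : ℕ → Ω → E} {κ : Kernel E E} {S : Set E}
  {ν : Measure E}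

lemma measurable (hX : IsQSDChain P X κ S ν) (n : ℕ) : Measurable (X n) := hX.isMarkov.1 n

lemma isMarkovKernel (hX : IsQSDChain P X κ S ν) : IsMarkovKernel κ := hX.isMarkov.2.1

lemma ae_mem_zero (hX : IsQSDChain P X κ S ν) : ∀ᵐ ω ∂P, X 0 ω ∈ S :=
  ae_of_ae_map (hX.measurable 0).aemeasurable (hX.map_zero ▸ ae_iff.2 hX.measure_compl)

variable [IsProbabilityMeasure P]

lemma isProbabilityMeasure (hX : IsQSDChain P X κ S ν) : IsProbabilityMeasure ν :=
  hX.map_zero ▸ Measure.isProbabilityMeasure_map (hX.measurable 0).aemeasurable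

lemma map_restrict_surv (hX : IsQSDChain P X κ S ν) (hS : MeasurableSet S) (n : ℕ) :
    (P.restrict (surv X S n)).map (X n) = P (surv X S n) • ν := by
  rcases n with _ | n
  · rw [surv_zero, Measure.restrict_univ, hX.map_zero, measure_univ, one_smul]
  ext A hA
  have hsurv :
      X (n + 1) ⁻¹' A ∩ surv X S (n + 1) = X (n + 1) ⁻¹' (A ∩ S) ∩ surv X S (n + 1) := by
    rw [surv_succ]
    ext ω
    simp only [Set.mem_inter_iff, Set.mem_preimage]
    tauto
  rw [Measure.map_apply (hX.measurable _) hA, Measure.restrict_apply (hX.measurable _ hA), hsurv,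
    hX.isQSD (n + 1) n.succ_pos (A ∩ S) Set.inter_subset_right (hA.inter hS),
    measure_inter_conull hX.measure_compl, Measure.smul_apply, smul_eq_mul, mul_comm]

lemma measure_surv_inter_preimage_succ (hX : IsQSDChain P X κ S ν) (hS : MeasurableSet S)
    {B : Set E} (hB : MeasurableSet B) (n : ℕ) :
    P (surv X S n ∩ X (n + 1) ⁻¹' B) = P (surv X S n) * ∫⁻ x, κ x B ∂ν := by
  rw [hX.isMarkov.measure_inter_preimage_succ (measurableSet_past_surv hS n) hB,
    ← lintegral_map (κ.measurable_coe hB) (hX.measurable n), hX.map_restrict_surv hS n,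
    lintegral_smul_measure, smul_eq_mul]

lemma measure_surv (hX : IsQSDChain P X κ S ν) (hS : MeasurableSet S) (n : ℕ) :
    P (surv X S n) = (∫⁻ x, κ x S ∂ν) ^ n := by
  induction n with
  | zero => simp [surv_zero]
  | succ n ih => rw [surv_succ, hX.measure_surv_inter_preimage_succ hS hS, ih, pow_succ]

lemma measure_surv_inter_exit (hX : IsQSDChain P X κ S ν) (hS : MeasurableSet S) {A : Set E}
    (hA : MeasurableSet A) (n : ℕ) :
    P (surv X S n ∩ X (n + 1) ⁻¹' (Sᶜ ∩ A)) = qsdExitLaw κ S ν (n + 1) A := by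
  rw [hX.measure_surv_inter_preimage_succ hS (hS.compl.inter hA), hX.measure_surv hS, qsdExitLaw]

lemma ae_exists_exit (hX : IsQSDChain P X κ S ν) (hS : MeasurableSet S)
    (hg : ∫⁻ x, κ x S ∂ν < 1) : ∀ᵐ ω ∂P, ∃ n, X n ω ∉ S := by
  refine ae_iff.2 (le_antisymm ?_ zero_le)
  refine ge_of_tendsto' (ENNReal.tendsto_pow_atTop_nhds_zero_of_lt_one hg) fun n => ?_
  rw [← hX.measure_surv hS n]
  exact measure_mono fun ω hω =>
    mem_surv_iff.2 fun i _ _ => (by simpa using hω : ∀ n, X n ω ∈ S) i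

lemma ae_exitTime_eq_zero (hX : IsQSDChain P X κ S ν) (hS : MeasurableSet S)
    (hg : ∫⁻ x, κ x S ∂ν = 1) : ∀ᵐ ω ∂P, exitTime X S ω = 0 := by
  have hsurv (n : ℕ) : ∀ᵐ ω ∂P, ω ∈ surv X S n :=
    ae_iff.2 ((prob_compl_eq_zero_iff
      (past_le hX.measurable n _ (measurableSet_past_surv hS n))).2
        (by rw [hX.measure_surv hS, hg, one_pow]))
  filter_upwards [hX.ae_mem_zero, ae_all_iff.2 hsurv] with ω h0 h
  refine exitTime_eq_zero_iff.2 (Or.inr fun n => ?_)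
  rcases Nat.eq_zero_or_pos n with rfl | hn
  exacts [h0, mem_surv_iff.1 (h n) n hn le_rfl]

lemma measure_exitTime_eq (hX : IsQSDChain P X κ S ν) (hS : MeasurableSet S) (k : ℕ)
    {A : Set E} (hA : MeasurableSet A) :
    P ({ω | exitTime X S ω = k} ∩ {ω | X (exitTime X S ω) ω ∈ A}) = qsdExitLaw κ S ν k A := by
  have := hX.isMarkovKernel
  have := hX.isProbabilityMeasure
  rcases k with _ | n
  · rcases (lintegral_kernel_le_one (κ := κ) (ν := ν) S).eq_or_lt with hg | hg
    · rw [qsdExitLaw, if_pos hg, ← hX.map_zero, Measure.map_apply (hX.measurable 0) hA]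
      refine measure_congr (Filter.eventuallyEq_set.2 ?_)
      filter_upwards [hX.ae_exitTime_eq_zero hS hg] with ω h
      simp [h]
    · rw [qsdExitLaw, if_neg hg.ne, measure_eq_zero_iff_ae_notMem]
      filter_upwards [hX.ae_mem_zero, hX.ae_exists_exit hS hg] with ω h0 ⟨m, hm⟩ hω
      rcases exitTime_eq_zero_iff.1 hω.1 with h | h
      exacts [h h0, hm (h m)]
  · rw [← hX.measure_surv_inter_exit hS hA n]
    refine measure_congr (Filter.eventuallyEq_set.2 ?_)
    filter_upwards [hX.ae_mem_zero] with ω h0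
    simp only [Set.mem_inter_iff, Set.mem_ofPred_eq, Set.mem_preimage, Set.mem_compl_iff]
    constructor
    · rintro ⟨hτ, hmem⟩
      rw [hτ] at hmem
      exact ⟨((exitTime_eq_succ_iff h0 n).1 hτ).1, ((exitTime_eq_succ_iff h0 n).1 hτ).2, hmem⟩
    · rintro ⟨hs, hn, hmem⟩
      have hτ := (exitTime_eq_succ_iff h0 n).2 ⟨hs, hn⟩
      exact ⟨hτ, by rwa [hτ]⟩

end IsQSDChain

end QSDChain

section Polling

variable {N T : ℕ} {τ : ℕ → ℕ}

def pollingBlock (N T : ℕ) (τ : ℕ → ℕ) : ℕ :=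
  sInf {m | 1 ≤ m ∧ ∃ i < N, τ i ≤ m * T}

def firstExitReplica (N T : ℕ) (τ : ℕ → ℕ) : ℕ :=
  sInf {i | i < N ∧ τ i ≤ pollingBlock N T τ * T}

/-- Replicas are numbered from `0`, so `firstExitReplica * T` is the paper's `(K - 1) T`. -/
def acceleratedTime (N T : ℕ) (τ : ℕ → ℕ) : ℕ :=
  N * (pollingBlock N T τ - 1) * T + firstExitReplica N T τ * T
    + (τ (firstExitReplica N T τ) - (pollingBlock N T τ - 1) * T)

lemma pollingBlock_mem (hN : 0 < N) (hT : 0 < T) :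
    1 ≤ pollingBlock N T τ ∧ ∃ i < N, τ i ≤ pollingBlock N T τ * T :=
  Nat.sInf_mem (s := {m | 1 ≤ m ∧ ∃ i < N, τ i ≤ m * T}) ⟨τ 0 + 1, Nat.le_add_left 1 _, 0, hN,
    (Nat.le_succ _).trans (Nat.le_mul_of_pos_right _ hT)⟩

lemma pollingBlock_le {i m : ℕ} (hi : i < N) (hm : 1 ≤ m) (h : τ i ≤ m * T) :
    pollingBlock N T τ ≤ m :=
  Nat.sInf_le ⟨hm, i, hi, h⟩

lemma pollingBlock_sub_one_mul_lt (hτ : ∀ j < N, 0 < τ j) {j : ℕ} (hj : j < N) :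
    (pollingBlock N T τ - 1) * T < τ j := by
  by_cases h : pollingBlock N T τ ≤ 1
  · simpa [Nat.sub_eq_zero_of_le h] using hτ j hj
  by_contra hle
  exact Nat.notMem_of_lt_sInf (show pollingBlock N T τ - 1 < pollingBlock N T τ by omega)
    ⟨by omega, j, hj, not_lt.1 hle⟩

lemma pollingBlock_eq (hN : 0 < N) (hT : 0 < T) {b i : ℕ} (hτ : ∀ j < N, b * T < τ j)
    (hi : i < N) (hτi : τ i ≤ (b + 1) * T) : pollingBlock N T τ = b + 1 := by
  refine le_antisymm (pollingBlock_le hi (Nat.le_add_left 1 b) hτi) ?_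
  obtain ⟨-, j, hj, hτj⟩ := pollingBlock_mem (τ := τ) hN hT
  exact Nat.lt_of_mul_lt_mul_right ((hτ j hj).trans_le hτj)

lemma firstExitReplica_mem (hN : 0 < N) (hT : 0 < T) :
    firstExitReplica N T τ < N ∧ τ (firstExitReplica N T τ) ≤ pollingBlock N T τ * T :=
  Nat.sInf_mem (pollingBlock_mem hN hT).2

lemma firstExitReplica_le {i : ℕ} (hi : i < N) (h : τ i ≤ pollingBlock N T τ * T) :
    firstExitReplica N T τ ≤ i :=
  Nat.sInf_le ⟨hi, h⟩

lemma pollingBlock_mul_lt_of_lt_firstExitReplica (hN : 0 < N) (hT : 0 < T) {j : ℕ}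
    (hj : j < firstExitReplica N T τ) : pollingBlock N T τ * T < τ j := by
  by_contra hle
  exact Nat.notMem_of_lt_sInf hj ⟨hj.trans (firstExitReplica_mem hN hT).1, not_lt.1 hle⟩

lemma firstExitReplica_eq (hN : 0 < N) (hT : 0 < T) {i : ℕ}
    (hτ : ∀ j < i, pollingBlock N T τ * T < τ j) (hi : i < N)
    (hτi : τ i ≤ pollingBlock N T τ * T) : firstExitReplica N T τ = i := by
  refine le_antisymm (firstExitReplica_le hi hτi) (not_lt.1 fun hlt => ?_)
  exact absurd (firstExitReplica_mem hN hT).2 (not_le.2 (hτ _ hlt))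

lemma firstExitReplica_eq_zero (hN : 0 < N) (h : τ 0 = 0) : firstExitReplica N T τ = 0 :=
  Nat.le_zero.1 (firstExitReplica_le hN (by simp [h]))

lemma acceleratedTime_eq_zero_iff (hN : 0 < N) (hT : 0 < T) :
    acceleratedTime N T τ = 0 ↔ τ 0 = 0 := by
  obtain ⟨hM, -⟩ := pollingBlock_mem (τ := τ) hN hT
  constructor
  · intro h
    obtain ⟨⟨hM1, hK⟩, hτK⟩ := by simpa [acceleratedTime, hT.ne'] using h
    simpa [hK, hM1.resolve_left hN.ne'] using hτK
  · intro h
    have hM1 : pollingBlock N T τ = 1 := le_antisymm (pollingBlock_le hN le_rfl (by simp [h])) hM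
    simp [acceleratedTime, hM1, firstExitReplica_eq_zero hN h, h]

lemma acceleratedTime_eq_iff (hN : 0 < N) (hT : 0 < T) (hτ : ∀ j < N, 0 < τ j) {b i r : ℕ}
    (hi : i < N) (hr : r < T) :
    acceleratedTime N T τ = (N * b + i) * T + r + 1 ↔
      pollingBlock N T τ = b + 1 ∧ firstExitReplica N T τ = i ∧ τ i = b * T + r + 1 := by
  constructor
  · intro h
    obtain ⟨hM, -⟩ := pollingBlock_mem (τ := τ) hN hT
    obtain ⟨hK, hτK⟩ := firstExitReplica_mem (τ := τ) hN hT
    have hlow := pollingBlock_sub_one_mul_lt (T := T) hτ hK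
    obtain ⟨c, hc⟩ : ∃ c, pollingBlock N T τ = c + 1 := ⟨_, (Nat.sub_add_cancel hM).symm⟩
    rw [hc, Nat.add_sub_cancel] at hlow
    rw [hc, add_one_mul] at hτK
    rw [acceleratedTime, hc, Nat.add_sub_cancel] at h
    have hclock : (N * c + firstExitReplica N T τ) * T + (τ (firstExitReplica N T τ) - c * T - 1)
        = (N * b + i) * T + r := by
      rw [add_mul]
      omega
    obtain ⟨hblock, hoffset⟩ := Nat.eq_and_eq_of_mul_add_eq (by omega) hr hclock
    obtain ⟨hcb, hKi⟩ :=
      Nat.eq_and_eq_of_mul_add_eq hK hi (by linarith [hblock] : c * N + _ = b * N + i)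
    subst hcb hKi
    exact ⟨hc, rfl, by omega⟩
  · rintro ⟨hM, hK, hτi⟩
    rw [acceleratedTime, hM, hK, hτi, Nat.add_sub_cancel,
      show b * T + r + 1 - b * T = r + 1 by omega]
    ring

lemma pollingBlock_eq_and_firstExitReplica_eq_iff (hN : 0 < N) (hT : 0 < T)
    (hτ : ∀ j < N, 0 < τ j) {b i r : ℕ} (hi : i < N) (hr : r < T) :
    (pollingBlock N T τ = b + 1 ∧ firstExitReplica N T τ = i ∧ τ i = b * T + r + 1) ↔
      (∀ j < N, j ≠ i → (if j < i then (b + 1) * T else b * T) < τ j) ∧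
        τ i = b * T + r + 1 := by
  constructor
  · rintro ⟨hM, hK, hτi⟩
    refine ⟨fun j hj _ => ?_, hτi⟩
    split_ifs with hji
    · exact hM ▸ pollingBlock_mul_lt_of_lt_firstExitReplica hN hT (hK ▸ hji)
    · simpa [hM] using pollingBlock_sub_one_mul_lt (T := T) hτ hj
  · rintro ⟨hlow, hτi⟩
    have hblock : ∀ j < N, b * T < τ j := by
      intro j hj
      by_cases hji : j = i
      · subst hji
        omega
      · refine lt_of_le_of_lt ?_ (hlow j hj hji)
        split_ifs
        exacts [Nat.mul_le_mul_right T (Nat.le_succ b), le_rfl]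
    have hM := pollingBlock_eq hN hT hblock hi (by rw [hτi, add_one_mul]; omega)
    refine ⟨hM, firstExitReplica_eq hN hT (fun j hj => ?_) hi
      (by rw [hM, hτi, add_one_mul]; omega), hτi⟩
    simpa [hM, hj] using hlow j (hj.trans hi) hj.ne

lemma exists_eq_mul_add_mul_add (hN : 0 < N) (hT : 0 < T) (s : ℕ) :
    ∃ b, ∃ i < N, ∃ r < T, s = (N * b + i) * T + r :=
  ⟨s / T / N, s / T % N, Nat.mod_lt _ hN, s % T, Nat.mod_lt _ hT, by
    rw [Nat.div_add_mod, Nat.div_add_mod']⟩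

end Polling

section Parallel

variable {N T : ℕ} {X : ℕ → ℕ → Ω → E} {S A : Set E}

def parallelExitTime (N T : ℕ) (X : ℕ → ℕ → Ω → E) (S : Set E) (ω : Ω) : ℕ :=
  acceleratedTime N T fun j => exitTime (X j) S ω

def parallelExitPoint (N T : ℕ) (X : ℕ → ℕ → Ω → E) (S : Set E) (ω : Ω) : E :=
  let K := firstExitReplica N T fun j => exitTime (X j) S ω
  X K (exitTime (X K) S ω) ω

/-- What replica `j` must do for the parallel step to exit at time `(N * b + i) * T + r + 1`
into `A`. -/
def parallelExitEvent (S A : Set E) (T b i r j : ℕ) : Set (ℕ → E) :=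
  if j = i then surv (fun k f => f k) S (b * T + r) ∩ (fun f => f (b * T + r + 1)) ⁻¹' (Sᶜ ∩ A)
  else surv (fun k f => f k) S (if j < i then (b + 1) * T else b * T)

lemma preimage_surv_coord (X : ℕ → Ω → E) (S : Set E) (n : ℕ) :
    (fun ω k => X k ω) ⁻¹' surv (fun k (f : ℕ → E) => f k) S n = surv X S n := by
  ext ω
  simp [mem_surv_iff]

lemma measurableSet_parallelExitEvent [MeasurableSpace E] (hS : MeasurableSet S)
    (hA : MeasurableSet A) (T b i r j : ℕ) : MeasurableSet (parallelExitEvent S A T b i r j) := by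
  have hsurv (n : ℕ) : MeasurableSet (surv (fun k (f : ℕ → E) => f k) S n) :=
    past_le measurable_pi_apply n _ (measurableSet_past_surv hS n)
  unfold parallelExitEvent
  split
  exacts [(hsurv _).inter (measurable_pi_apply _ (hS.compl.inter hA)), hsurv _]

lemma parallelExit_eq_succ_iff (hN : 0 < N) (hT : 0 < T) {ω : Ω}
    (hgood : ∀ j < N, X j 0 ω ∈ S ∧ ∃ n, X j n ω ∉ S) {b i r : ℕ} (hi : i < N) (hr : r < T) :
    (parallelExitTime N T X S ω = (N * b + i) * T + r + 1 ∧ parallelExitPoint N T X S ω ∈ A) ↔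
      ω ∈ ⋂ j ∈ Finset.range N, (fun ω k => X j k ω) ⁻¹' parallelExitEvent S A T b i r j := by
  have hpos : ∀ j < N, 0 < exitTime (X j) S ω := fun j hj =>
    (lt_exitTime_iff (hgood j hj).1 (hgood j hj).2 0).2 (by simp [surv_zero])
  simp only [Set.mem_iInter, Finset.mem_range, Set.mem_preimage, parallelExitTime,
    acceleratedTime_eq_iff hN hT hpos hi hr]
  have hcoord (j : ℕ) (n : ℕ) :
      (fun k => X j k ω) ∈ surv (fun k (f : ℕ → E) => f k) S n ↔ ω ∈ surv (X j) S n :=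
    Set.ext_iff.1 (preimage_surv_coord (X j) S n) ω
  constructor
  · rintro ⟨hdecode, hmem⟩
    obtain ⟨hlow, hτi⟩ := (pollingBlock_eq_and_firstExitReplica_eq_iff hN hT hpos hi hr).1 hdecode
    simp only [parallelExitPoint, hdecode.2.1, hτi] at hmem
    intro j hj
    unfold parallelExitEvent
    split
    · subst j
      obtain ⟨hs, hexit⟩ := (exitTime_eq_succ_iff (hgood i hi).1 _).1 hτi
      exact ⟨(hcoord i _).2 hs, hexit, hmem⟩
    · exact (hcoord j _).2 ((lt_exitTime_iff (hgood j hj).1 (hgood j hj).2 _).1 (hlow j hj ‹_›))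
  · intro h
    have hlow : ∀ j < N, j ≠ i → (if j < i then (b + 1) * T else b * T) < exitTime (X j) S ω := by
      intro j hj hji
      have hj' := h j hj
      rw [parallelExitEvent, if_neg hji, hcoord] at hj'
      exact (lt_exitTime_iff (hgood j hj).1 (hgood j hj).2 _).2 hj'
    have hi' := h i hi
    rw [parallelExitEvent, if_pos rfl] at hi'
    obtain ⟨hs, hexit, hmem⟩ := hi'
    have hτi := (exitTime_eq_succ_iff (hgood i hi).1 _).2 ⟨(hcoord i _).1 hs, hexit⟩
    obtain ⟨hM, hK, -⟩ :=
      (pollingBlock_eq_and_firstExitReplica_eq_iff hN hT hpos hi hr).2 ⟨hlow, hτi⟩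
    refine ⟨⟨hM, hK, hτi⟩, ?_⟩
    simpa only [parallelExitPoint, hK, hτi] using hmem

end Parallel

section ParallelLaw

variable [MeasurableSpace E] [MeasurableSpace Ω] {P : Measure Ω} [IsProbabilityMeasure P]
  {κ : Kernel E E} {ν : Measure E} {N T : ℕ} {X : ℕ → ℕ → Ω → E} {S A : Set E}

lemma measure_parallelExit_succ_of_lt_one (hN : 0 < N) (hT : 0 < T)
    (hindep : iIndepFun (fun i ω n => X i n ω) P) (hX : ∀ i < N, IsQSDChain P (X i) κ S ν)
    (hS : MeasurableSet S) (hA : MeasurableSet A) (hg : ∫⁻ x, κ x S ∂ν < 1) (s : ℕ) :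
    P ({ω | parallelExitTime N T X S ω = s + 1} ∩ {ω | parallelExitPoint N T X S ω ∈ A})
      = qsdExitLaw κ S ν (s + 1) A := by
  obtain ⟨b, i, hi, r, hr, rfl⟩ := exists_eq_mul_add_mul_add hN hT s
  have hgood : ∀ᵐ ω ∂P, ∀ j ∈ Finset.range N, X j 0 ω ∈ S ∧ ∃ n, X j n ω ∉ S :=
    (Filter.eventually_all_finset _).2 fun j hj => (hX j (Finset.mem_range.1 hj)).ae_mem_zero.and
      ((hX j (Finset.mem_range.1 hj)).ae_exists_exit hS hg)
  have hsurv {j : ℕ} (hj : j < N) (n : ℕ) :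
      P ((fun ω k => X j k ω) ⁻¹' surv (fun k f => f k) S n) = (∫⁻ x, κ x S ∂ν) ^ n := by
    rw [preimage_surv_coord, (hX j hj).measure_surv hS]
  calc _ = P (⋂ j ∈ Finset.range N, (fun ω k => X j k ω) ⁻¹' parallelExitEvent S A T b i r j) :=
        measure_congr (Filter.eventuallyEq_set.2 (hgood.mono fun ω hω => parallelExit_eq_succ_iff
          hN hT (fun j hj => hω j (Finset.mem_range.2 hj)) hi hr))
    _ = ∏ j ∈ Finset.range N, P ((fun ω k => X j k ω) ⁻¹' parallelExitEvent S A T b i r j) :=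
        hindep.measure_inter_preimage_eq_mul _ fun j _ =>
          measurableSet_parallelExitEvent hS hA T b i r j
    _ = ((∫⁻ x, κ x S ∂ν) ^ ((b + 1) * T)) ^ i * qsdExitLaw κ S ν (b * T + r + 1) A
          * ((∫⁻ x, κ x S ∂ν) ^ (b * T)) ^ (N - i - 1) := by
        refine Finset.prod_range_eq_pow_mul_mul_pow hi (fun j hj => ?_) ?_ fun j hij hj => ?_
        · rw [parallelExitEvent, if_neg hj.ne, if_pos hj, hsurv (hj.trans hi)]
        · rw [parallelExitEvent, if_pos rfl, Set.preimage_inter, preimage_surv_coord]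
          exact (hX i hi).measure_surv_inter_exit hS hA _
        · rw [parallelExitEvent, if_neg hij.ne', if_neg hij.not_gt, hsurv hj]
    _ = qsdExitLaw κ S ν ((N * b + i) * T + r + 1) A := by
        obtain ⟨p, rfl⟩ : ∃ p, N = i + 1 + p := ⟨N - i - 1, by omega⟩
        simp only [qsdExitLaw, show i + 1 + p - i - 1 = p by omega]
        ring

lemma measure_parallelExit_eq (hN : 0 < N) (hT : 0 < T)
    (hindep : iIndepFun (fun i ω n => X i n ω) P) (hX : ∀ i < N, IsQSDChain P (X i) κ S ν)
    (hS : MeasurableSet S) (k : ℕ) (hA : MeasurableSet A) :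
    P ({ω | parallelExitTime N T X S ω = k} ∩ {ω | parallelExitPoint N T X S ω ∈ A})
      = qsdExitLaw κ S ν k A := by
  have := (hX 0 hN).isMarkovKernel
  have := (hX 0 hN).isProbabilityMeasure
  rcases k with _ | s
  · rw [← (hX 0 hN).measure_exitTime_eq hS 0 hA]
    congr 1
    ext ω
    simp only [Set.mem_inter_iff, Set.mem_ofPred_eq, parallelExitTime,
      acceleratedTime_eq_zero_iff hN hT]
    refine and_congr_right fun h0 => ?_
    simp only [parallelExitPoint,
      firstExitReplica_eq_zero (T := T) (τ := fun j => exitTime (X j) S ω) hN h0]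
  rcases (lintegral_kernel_le_one (κ := κ) (ν := ν) S).eq_or_lt with hg | hg
  · rw [qsdExitLaw, lintegral_kernel_compl_inter_eq_zero hS hg, mul_zero]
    refine measure_mono_null Set.inter_subset_left (measure_eq_zero_iff_ae_notMem.2 ?_)
    filter_upwards [(hX 0 hN).ae_exitTime_eq_zero hS hg] with ω h0 hω
    simp [parallelExitTime,
      (acceleratedTime_eq_zero_iff (τ := fun j => exitTime (X j) S ω) hN hT).2 h0] at hω
  · exact measure_parallelExit_succ_of_lt_one hN hT hindep hX hS hA hg s

end ParallelLaw

end ParRep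

theorem parallel_step_exit_law_general
    {E Ω Ω' : Type*} [MeasurableSpace E] [MeasurableSpace Ω] [MeasurableSpace Ω']
    (P : Measure Ω) [IsProbabilityMeasure P]
    (P' : Measure Ω') [IsProbabilityMeasure P']
    (κ : ProbabilityTheory.Kernel E E)
    (S : Set E) (hS : MeasurableSet S)
    (ν : Measure E) (hsupp : ν Sᶜ = 0)
    (N : ℕ) (hN : 1 ≤ N) (Tpoll : ℕ) (hT : 1 ≤ Tpoll)
    (X : ℕ → ℕ → Ω → E)
    (hindep : ProbabilityTheory.iIndepFun (fun (i : ℕ) => fun ω (n : ℕ) => X i n ω) P)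
    (hMarkov : ∀ i < N, ParRep.IsMarkov P (X i) κ)
    (hinit : ∀ i < N, P.map (X i 0) = ν)
    (hQSD : ∀ i < N, ParRep.IsQSD P (X i) S ν)
    (τ : ℕ → Ω → ℕ) (hτ : ∀ i ω, τ i ω = ParRep.exitTime (X i) S ω)
    (M : Ω → ℕ) (hM : ∀ ω, M ω = sInf {m | 1 ≤ m ∧ ∃ i < N, τ i ω ≤ m * Tpoll})
    (K : Ω → ℕ) (hK : ∀ ω, K ω = sInf {i | i < N ∧ τ i ω ≤ M ω * Tpoll})
    (τacc : Ω → ℕ)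
    (hτacc : ∀ ω, τacc ω
      = N * (M ω - 1) * Tpoll + K ω * Tpoll + (τ (K ω) ω - (M ω - 1) * Tpoll))
    (Xacc : Ω → E) (hXacc : ∀ ω, Xacc ω = X (K ω) (τ (K ω) ω) ω)
    (X' : ℕ → Ω' → E) (hMarkov' : ParRep.IsMarkov P' X' κ)
    (hinit' : P'.map (X' 0) = ν) (hQSD' : ParRep.IsQSD P' X' S ν) :
    ∀ (k : ℕ) (A : Set E), MeasurableSet A →
      P ({ω | τacc ω = k} ∩ {ω | Xacc ω ∈ A})
        = P' ({ω | ParRep.exitTime X' S ω = k}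
            ∩ {ω | X' (ParRep.exitTime X' S ω) ω ∈ A}) := by
  intro k A hA
  obtain rfl : τ = fun i ω => ParRep.exitTime (X i) S ω := funext fun i => funext (hτ i)
  obtain rfl : τacc = ParRep.parallelExitTime N Tpoll X S :=
    funext fun ω => by rw [hτacc, hK, hM]; rfl
  obtain rfl : Xacc = ParRep.parallelExitPoint N Tpoll X S :=
    funext fun ω => by rw [hXacc, hK, hM]; rfl
  rw [ParRep.measure_parallelExit_eq hN hT hindep
      (fun i hi => ⟨hMarkov i hi, hQSD i hi, hinit i hi, hsupp⟩) hS k hA,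
    (ParRep.IsQSDChain.mk hMarkov' hQSD' hinit' hsupp).measure_exitTime_eq hS k hA]

/-- With exact QSD sampling in the Dephasing Step, the pair
`(τacc, Xacc)` produced by the Parallel Step has the same joint law as `(τ, X τ)` for
the chain started from the QSD `ν` in `S`. -/
theorem parallel_step_exit_law
    {E Ω Ω' : Type*} [MeasurableSpace E] [MeasurableSpace Ω] [MeasurableSpace Ω']
    (P : Measure Ω) [IsProbabilityMeasure P]
    (P' : Measure Ω') [IsProbabilityMeasure P']
    (κ : ProbabilityTheory.Kernel E E)
    (S : Set E) (hS : MeasurableSet S)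
    (ν : Measure E) (hν : IsProbabilityMeasure ν) (hsupp : ν Sᶜ = 0)
    (N : ℕ) (hN : 1 ≤ N) (Tpoll : ℕ) (hT : 1 ≤ Tpoll)
    (X : ℕ → ℕ → Ω → E)
    (hindep : ProbabilityTheory.iIndepFun (fun (i : ℕ) => fun ω (n : ℕ) => X i n ω) P)
    (hMarkov : ∀ i < N, ParRep.IsMarkov P (X i) κ)
    (hinit : ∀ i < N, P.map (X i 0) = ν)
    (hQSD : ∀ i < N, ParRep.IsQSD P (X i) S ν)
    (τ : ℕ → Ω → ℕ) (hτ : ∀ i ω, τ i ω = ParRep.exitTime (X i) S ω)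
    (M : Ω → ℕ) (hM : ∀ ω, M ω = sInf {m | 1 ≤ m ∧ ∃ i < N, τ i ω ≤ m * Tpoll})
    (K : Ω → ℕ) (hK : ∀ ω, K ω = sInf {i | i < N ∧ τ i ω ≤ M ω * Tpoll})
    (τacc : Ω → ℕ)
    (hτacc : ∀ ω, τacc ω
      = N * (M ω - 1) * Tpoll + K ω * Tpoll + (τ (K ω) ω - (M ω - 1) * Tpoll))
    (Xacc : Ω → E) (hXacc : ∀ ω, Xacc ω = X (K ω) (τ (K ω) ω) ω)
    (X' : ℕ → Ω' → E) (hMarkov' : ParRep.IsMarkov P' X' κ)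
    (hinit' : P'.map (X' 0) = ν) (hQSD' : ParRep.IsQSD P' X' S ν) :
    ∀ (k : ℕ) (A : Set E), MeasurableSet A →
      P ({ω | τacc ω = k} ∩ {ω | Xacc ω ∈ A})
        = P' ({ω | ParRep.exitTime X' S ω = k}
            ∩ {ω | X' (ParRep.exitTime X' S ω) ω ∈ A}) :=
  parallel_step_exit_law_general P P' κ S hS ν hsupp N hN Tpoll hT X hindep hMarkov hinit hQSD τ hτ
    M hM K hK τacc hτacc Xacc hXacc X' hMarkov' hinit' hQSD'
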